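/- arXiv:2407.02948 — 5 statements merged into one kernel-verified Lean document; each statement's English description precedes it below -/
import Mathlib

section
/- With V and V̄ as above (V continuous increasing, constant equal to V(0) on [0, μ_e], V̄ affine), the function l(μ) = 1 - (1-μ)·(V(1)-V(0))/(V(1)-V̄(μ)) is (weakly) decreasing in μ on any interval where V̄ is increasing, V(1) > V̄(μ) > V(0), and full disclosure is implementable, i.e. (1-μ)·V(0) + μ·V(1) ≥ V̄(μ). -/
open Set

theorem stmt_7 (V Vbar : ℝ → ℝ) (μ_e : ℝ)
    (hVc : Continuous V) (hVmono : MonotoneOn V (Icc (0:ℝ) 1))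
    (hconst : ∀ μ ∈ Icc (0:ℝ) μ_e, V μ = V 0)
    (haff : ∀ μ, Vbar μ = Vbar 0 + (Vbar 1 - Vbar 0) * μ)
    (hfear : Vbar 0 ≤ V 0) (hbar1 : V 1 ≤ Vbar 1) :
    ∀ μ μ', μ ∈ Icc (0:ℝ) 1 → μ' ∈ Icc (0:ℝ) 1 → μ ≤ μ' → Vbar μ ≤ Vbar μ' →
      V 0 < Vbar μ → Vbar μ < V 1 → V 0 < Vbar μ' → Vbar μ' < V 1 →
      Vbar μ ≤ (1 - μ) * V 0 + μ * V 1 → Vbar μ' ≤ (1 - μ') * V 0 + μ' * V 1 →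
      1 - (1 - μ') * (V 1 - V 0) / (V 1 - Vbar μ') ≤
        1 - (1 - μ) * (V 1 - V 0) / (V 1 - Vbar μ) := by
  intro μ μ' hμ hμ' hle hVle h1 h2 h3 h4 h5 h6
  have hd : (0:ℝ) < V 1 - Vbar μ := by linarith
  have hd' : (0:ℝ) < V 1 - Vbar μ' := by linarith
  have key : (1 - μ) * (V 1 - V 0) / (V 1 - Vbar μ) ≤
      (1 - μ') * (V 1 - V 0) / (V 1 - Vbar μ') := by
    rw [div_le_div_iff₀ hd hd']
    have e1 := haff μ
    have e2 := haff μ'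
    nlinarith [mul_nonneg (sub_nonneg.2 hle) (sub_nonneg.2 hbar1)]
  linarith
end

section
/- Let V : [0,1] → ℝ be continuous increasing and concave on [μ_e, 1], V constant on [0, μ_e], and V̄ affine with V̄(0) ≤ V(0) and V̄(1) ≥ V(1). Suppose μ₁ ∈ (μ_e, 1) satisfies cav(V)(μ₁) ≥ V̄(μ₁) but (1-μ₁)·V(0) + μ₁·V(1) < V̄(μ₁) (full disclosure fails the participation constraint). Then there exists h(μ₁) ∈ (μ_e, 1) solving (1 - μ₁/h)·V(0) + (μ₁/h)·V(h) = V̄(μ₁), and for any binary Bayes-plausible signal {x, y} with y ≤ μ_e ≤ x and ((x-μ₁)/(x-y))·V(y) + ((μ₁-y)/(x-y))·V(x) ≥ V̄(μ₁), one has x ≤ h(μ₁). -/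
/-!
For a fixed upper posterior `x`, moving the lower posterior `y ≤ μ_e` down to `0` keeps its value
`V y = V 0` but shifts weight towards `x`, where `V x ≥ V 0`; so any signal meeting the participation
constraint is dominated by the perfect-bad-news signal `{0, x}`. The payoff of `{0, x}` is continuous
in `x`, reaches `V̄(μ₁)` somewhere by feasibility and falls short at `x = 1` by the failure of full
disclosure, so the largest `x` meeting the constraint is a root `h(μ₁) < 1`, and it bounds every
feasible upper posterior.
-/

open Set

theorem binary_mix_le_perfect_bad_news_mix {a b μ x y : ℝ} (hab : a ≤ b) (hy : 0 ≤ y)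
    (hyx : y < x) (hμx : μ ≤ x) :
    (x - μ) / (x - y) * a + (μ - y) / (x - y) * b ≤ (1 - μ / x) * a + μ / x * b := by
  have hx : 0 < x := hy.trans_lt hyx
  have hxy : 0 < x - y := sub_pos.mpr hyx
  have hweight : (μ - y) / (x - y) ≤ μ / x := by
    rw [div_le_div_iff₀ hxy hx]
    nlinarith
  have hsplit : (x - μ) / (x - y) = 1 - (μ - y) / (x - y) := by
    field_simp
    ring
  rw [hsplit]
  nlinarith [mul_nonneg (sub_nonneg.mpr hweight) (sub_nonneg.mpr hab)]

theorem exists_isGreatest_superlevel_eq_of_continuousOn {g : ℝ → ℝ} {a b c x₀ : ℝ}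
    (hg : ContinuousOn g (Icc a b)) (hx₀ : x₀ ∈ Icc a b) (hcx₀ : c ≤ g x₀) (hgb : g b < c) :
    ∃ h ∈ Ico a b, g h = c ∧ ∀ x ∈ Icc a b, c ≤ g x → x ≤ h := by
  set S := {x ∈ Icc a b | c ≤ g x}
  have hS : IsCompact S :=
    isCompact_Icc.of_isClosed_subset (hg.preimage_isClosed_of_isClosed isClosed_Icc isClosed_Ici)
      (fun _ hx ↦ hx.1)
  obtain ⟨h, ⟨⟨hah, hhb⟩, hch⟩, hmax⟩ := hS.exists_isGreatest ⟨x₀, hx₀, hcx₀⟩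
  have hhb' : h < b := hhb.lt_of_ne (by rintro rfl; linarith)
  refine ⟨h, ⟨hah, hhb'⟩, ?_, fun x hx hcx ↦ hmax ⟨hx, hcx⟩⟩
  obtain ⟨z, ⟨hhz, hzb⟩, hgz⟩ :=
    intermediate_value_Icc' hhb'.le (hg.mono (Icc_subset_Icc hah le_rfl)) ⟨hgb.le, hch⟩
  obtain rfl : z = h := (hmax ⟨⟨hah.trans hhz, hzb⟩, hgz.ge⟩).antisymm hhz
  exact hgz

theorem stmt_8_general (V Vbar : ℝ → ℝ) (μ_e μ₁ : ℝ)
    (hVc : Continuous V) (hVmono : MonotoneOn V (Icc (0:ℝ) 1))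
    (hconst : ∀ μ ∈ Icc (0:ℝ) μ_e, V μ = V 0)
    (hμ₁ : μ₁ ∈ Ioo μ_e 1)
    (hM : ∃ x ∈ Icc μ_e 1, ∃ y ∈ Icc (0:ℝ) μ_e, y ≤ μ₁ ∧ μ₁ ≤ x ∧ y < x ∧
      Vbar μ₁ ≤ ((x - μ₁) / (x - y)) * V y + ((μ₁ - y) / (x - y)) * V x)
    (hD : (1 - μ₁) * V 0 + μ₁ * V 1 < Vbar μ₁) :
    ∃ h ∈ Ioo μ_e 1,
      (1 - μ₁ / h) * V 0 + (μ₁ / h) * V h = Vbar μ₁ ∧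
      ∀ x ∈ Icc μ_e 1, ∀ y ∈ Icc (0:ℝ) μ_e, y ≤ μ₁ → μ₁ ≤ x → y < x →
        Vbar μ₁ ≤ ((x - μ₁) / (x - y)) * V y + ((μ₁ - y) / (x - y)) * V x → x ≤ h := by
  set g : ℝ → ℝ := fun x ↦ (1 - μ₁ / x) * V 0 + (μ₁ / x) * V x
  have hdominated : ∀ x ∈ Icc μ_e 1, ∀ y ∈ Icc (0:ℝ) μ_e, μ₁ ≤ x → y < x →
      Vbar μ₁ ≤ ((x - μ₁) / (x - y)) * V y + ((μ₁ - y) / (x - y)) * V x → Vbar μ₁ ≤ g x := by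
    intro x hx y hy hμx hyx hpay
    have hV0x : V 0 ≤ V x :=
      hVmono ⟨le_rfl, zero_le_one⟩ ⟨hy.1.trans hyx.le, hx.2⟩ (hy.1.trans hyx.le)
    rw [hconst y hy] at hpay
    exact hpay.trans (binary_mix_le_perfect_bad_news_mix hV0x hy.1 hyx hμx)
  obtain ⟨x₀, hx₀, y₀, hy₀, -, hμx₀, hyx₀, hpay₀⟩ := hM
  have hμ₁_pos : 0 < μ₁ := hy₀.1.trans_lt (hy₀.2.trans_lt hμ₁.1)
  have hg : ContinuousOn g (Icc μ₁ 1) := by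
    have hne : ∀ x ∈ Icc μ₁ 1, x ≠ 0 := fun x hx ↦ (hμ₁_pos.trans_le hx.1).ne'
    fun_prop (disch := assumption)
  have hg1 : g 1 < Vbar μ₁ := by simpa [g] using hD
  obtain ⟨h, ⟨hμ₁h, hh1⟩, hgh, hmax⟩ := exists_isGreatest_superlevel_eq_of_continuousOn hg
    ⟨hμx₀, hx₀.2⟩ (hdominated x₀ hx₀ y₀ hy₀ hμx₀ hyx₀ hpay₀) hg1
  refine ⟨h, ⟨hμ₁.1.trans_le hμ₁h, hh1⟩, hgh, ?_⟩
  intro x hx y hy _ hμx hyx hpay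
  exact hmax x ⟨hμx, hx.2⟩ (hdominated x hx y hy hμx hyx hpay)

theorem stmt_8 (V Vbar : ℝ → ℝ) (μ_e μ₁ : ℝ)
    (hVc : Continuous V) (hVmono : MonotoneOn V (Icc (0:ℝ) 1))
    (hVconc : ConcaveOn ℝ (Icc μ_e 1) V)
    (hconst : ∀ μ ∈ Icc (0:ℝ) μ_e, V μ = V 0)
    (haff : ∀ μ, Vbar μ = Vbar 0 + (Vbar 1 - Vbar 0) * μ)
    (hfear : Vbar 0 ≤ V 0) (hbar1 : V 1 ≤ Vbar 1)
    (hμe : μ_e ∈ Ioo (0:ℝ) 1) (hμ₁ : μ₁ ∈ Ioo μ_e 1)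
    (hM : ∃ x ∈ Icc μ_e 1, ∃ y ∈ Icc (0:ℝ) μ_e, y ≤ μ₁ ∧ μ₁ ≤ x ∧ y < x ∧
      Vbar μ₁ ≤ ((x - μ₁) / (x - y)) * V y + ((μ₁ - y) / (x - y)) * V x)
    (hD : (1 - μ₁) * V 0 + μ₁ * V 1 < Vbar μ₁) :
    ∃ h ∈ Ioo μ_e 1,
      (1 - μ₁ / h) * V 0 + (μ₁ / h) * V h = Vbar μ₁ ∧
      ∀ x ∈ Icc μ_e 1, ∀ y ∈ Icc (0:ℝ) μ_e, y ≤ μ₁ → μ₁ ≤ x → y < x →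
        Vbar μ₁ ≤ ((x - μ₁) / (x - y)) * V y + ((μ₁ - y) / (x - y)) * V x → x ≤ h :=
  stmt_8_general V Vbar μ_e μ₁ hVc hVmono hconst hμ₁ hM hD
end

section
/- Verification of the best-good-news condition for the doctor-patient problem: let P(μ) = p̄ for μ ≤ μ_e and P(μ) = μ·p_H + (1-μ)·p_L for μ > μ_e with p̄ > p_H > p_L and p(x) < p̄ for the relevant x; let V be increasing with V constant on [0, μ_e]. Then for any x > μ_e and d(x) ≤ μ_e (so V(d(x)) = V(0), P(d(x)) = p̄, P'(d(x)) = 0): (S_P(x) - P'(x))/(S_P(x) - P'(d(x))) = 1 + (p_H - p_L)(x - d(x))/(p̄ - p(x)) > 1, while (S_V(x) - V'(x))/(S_V(x) - V'(d(x))) = 1 - V'(x)·(x - d(x))/(V(x) - V(0)) < 1 whenever V'(x) > 0 and V(x) > V(0). Hence the best-good-news inequality S_P(x) - P'(x) ≤ [(S_V(x)-V'(x))/(S_V(x)-V'(d(x)))]·(S_P(x) - P'(d(x))) holds, since S_P(x) - P'(d(x)) = S_P(x) < 0. -/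
open Set

theorem stmt_14 (V : ℝ → ℝ) (pbar pH pL μ_e x d Vx : ℝ)
    (h1 : pH < pbar) (h2 : pL < pH)
    (hx : μ_e < x) (hx1 : x ≤ 1) (hd0 : 0 ≤ d) (hdμ : d ≤ μ_e)
    (hpx : x * pH + (1 - x) * pL < pbar)
    (hVd : V d = V 0) (hVx : 0 < Vx) (hV0 : V 0 < V x) :
    ((((x * pH + (1 - x) * pL) - pbar) / (x - d)) - (pH - pL)) /
        ((((x * pH + (1 - x) * pL) - pbar) / (x - d)) - 0) =
      1 + (pH - pL) * (x - d) / (pbar - (x * pH + (1 - x) * pL)) ∧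
    1 < ((((x * pH + (1 - x) * pL) - pbar) / (x - d)) - (pH - pL)) /
        ((((x * pH + (1 - x) * pL) - pbar) / (x - d)) - 0) ∧
    (((V x - V 0) / (x - d)) - Vx) / (((V x - V 0) / (x - d)) - 0) =
      1 - Vx * (x - d) / (V x - V 0) ∧
    (((V x - V 0) / (x - d)) - Vx) / (((V x - V 0) / (x - d)) - 0) < 1 ∧
    (((x * pH + (1 - x) * pL) - pbar) / (x - d)) < 0 ∧
    (((x * pH + (1 - x) * pL) - pbar) / (x - d)) - (pH - pL) ≤
      ((((V x - V 0) / (x - d)) - Vx) / (((V x - V 0) / (x - d)) - 0)) *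
        ((((x * pH + (1 - x) * pL) - pbar) / (x - d)) - 0) := by
  have hxd : 0 < x - d := by linarith
  have hpb : 0 < pbar - (x * pH + (1 - x) * pL) := by linarith
  have hVV : 0 < V x - V 0 := by linarith
  have hS : (((x * pH + (1 - x) * pL) - pbar) / (x - d)) < 0 :=
    div_neg_of_neg_of_pos (by linarith) hxd
  have hSV : 0 < ((V x - V 0) / (x - d)) := div_pos hVV hxd
  have e1 : ((((x * pH + (1 - x) * pL) - pbar) / (x - d)) - (pH - pL)) /
        ((((x * pH + (1 - x) * pL) - pbar) / (x - d)) - 0) =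
      1 + (pH - pL) * (x - d) / (pbar - (x * pH + (1 - x) * pL)) := by
    have hne : x - d ≠ 0 := ne_of_gt hxd
    have hne2 : (x * pH + (1 - x) * pL) - pbar ≠ 0 := ne_of_lt (by linarith)
    have hne2' : pbar - (x * pH + (1 - x) * pL) ≠ 0 := ne_of_gt hpb
    rw [sub_zero]
    field_simp
    ring
  have e3 : (((V x - V 0) / (x - d)) - Vx) / (((V x - V 0) / (x - d)) - 0) =
      1 - Vx * (x - d) / (V x - V 0) := by
    have hne : x - d ≠ 0 := ne_of_gt hxd
    have hne3 : V x - V 0 ≠ 0 := ne_of_gt hVV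
    rw [sub_zero]
    field_simp
  have h4 : (((V x - V 0) / (x - d)) - Vx) / (((V x - V 0) / (x - d)) - 0) < 1 := by
    rw [e3]
    have : 0 < Vx * (x - d) / (V x - V 0) := div_pos (by positivity) hVV
    linarith
  refine ⟨e1, ?_, e3, h4, hS, ?_⟩
  · rw [e1]
    have : 0 < (pH - pL) * (x - d) / (pbar - (x * pH + (1 - x) * pL)) :=
      div_pos (by nlinarith) hpb
    linarith
  · have hle1 : (((V x - V 0) / (x - d)) - Vx) / (((V x - V 0) / (x - d)) - 0) ≤ 1 :=
      le_of_lt h4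
    have h5 := mul_le_mul_of_nonpos_right hle1 (le_of_lt hS)
    rw [one_mul] at h5
    simp only [sub_zero] at h5 ⊢
    linarith
end

section
/- Let V : [0,1] → ℝ be constant on [0, α_e] equal to V(α_e), strictly concave and increasing on [α_e, 1], and continuously differentiable on (0,1) except possibly at α_e. For α₀ ∈ (α_e, 1) define l(α₀) = argmax_{α' ∈ [0, α_e]} (V(α₀) - V(α'))/(α₀ - α'), assumed unique with l(α₀) interior and characterized by (V(α₀) - V(l(α₀)))/(α₀ - l(α₀)) = V'(l(α₀)). Suppose V'(α₀) > V'(l(α₀)) and V'' (l(α₀)) < 0. Then dl/dα₀ = (V'(α₀) - V'(l(α₀)))/(V''(l(α₀))·(α₀ - l(α₀))) < 0, i.e. the tangency point l is strictly decreasing in α₀. -/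
/-! Differentiating the tangency identity `V z - V (l z) = V' (l z) * (z - l z)` at `α₀`, the
terms `V' (l α₀) * l'` cancel and leave `V' α₀ - V' (l α₀) = V'' (l α₀) * (α₀ - l α₀) * l'`;
the right-hand factor `V'' (l α₀) * (α₀ - l α₀)` is negative while the left-hand side is positive. -/

theorem hasDerivAt_tangency_gap {V V' l : ℝ → ℝ} {α₀ l' w : ℝ}
    (hV : HasDerivAt V (V' α₀) α₀) (hVl : HasDerivAt V (V' (l α₀)) (l α₀))
    (hV' : HasDerivAt V' w (l α₀)) (hl : HasDerivAt l l' α₀) :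
    HasDerivAt (fun z => V z - V (l z) - V' (l z) * (z - l z))
      (V' α₀ - V' (l α₀) - w * (α₀ - l α₀) * l') α₀ := by
  have h : HasDerivAt (fun z => V z - V (l z) - V' (l z) * (z - l z))
      (V' α₀ - V' (l α₀) * l' - (w * l' * (α₀ - l α₀) + V' (l α₀) * (1 - l'))) α₀ :=
    (hV.sub (hVl.comp α₀ hl)).sub ((hV'.comp α₀ hl).mul ((hasDerivAt_id α₀).sub hl))
  exact h.congr_deriv (by ring)

theorem sub_eq_mul_of_tangency {V V' l : ℝ → ℝ} {α₀ l' w : ℝ}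
    (hV : HasDerivAt V (V' α₀) α₀) (hVl : HasDerivAt V (V' (l α₀)) (l α₀))
    (hV' : HasDerivAt V' w (l α₀)) (hl : HasDerivAt l l' α₀)
    (htan : ∀ z, V z - V (l z) = V' (l z) * (z - l z)) :
    V' α₀ - V' (l α₀) = w * (α₀ - l α₀) * l' := by
  have hgap : (fun z => V z - V (l z) - V' (l z) * (z - l z)) = fun _ => 0 := by
    funext z
    rw [htan z, sub_self]
  have h := hasDerivAt_tangency_gap hV hVl hV' hl
  rw [hgap] at h
  exact sub_eq_zero.mp (h.unique (hasDerivAt_const α₀ 0))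

theorem stmt_17 (V V' V'' l : ℝ → ℝ) (α₀ l' : ℝ)
    (hderiv : ∀ x, HasDerivAt V (V' x) x)
    (hl : HasDerivAt l l' α₀)
    (hderiv2 : HasDerivAt V' (V'' (l α₀)) (l α₀))
    (htan : ∀ z, V z - V (l z) = V' (l z) * (z - l z))
    (hlt : l α₀ < α₀)
    (hnum : V' (l α₀) < V' α₀)
    (hV'' : V'' (l α₀) < 0) :
    l' = (V' α₀ - V' (l α₀)) / (V'' (l α₀) * (α₀ - l α₀)) ∧ l' < 0 := by
  have hkey := sub_eq_mul_of_tangency (hderiv α₀) (hderiv (l α₀)) hderiv2 hl htan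
  have hden : V'' (l α₀) * (α₀ - l α₀) < 0 := mul_neg_of_neg_of_pos hV'' (sub_pos.mpr hlt)
  have hl' : l' = (V' α₀ - V' (l α₀)) / (V'' (l α₀) * (α₀ - l α₀)) := by
    rw [hkey, mul_div_cancel_left₀ l' hden.ne]
  exact ⟨hl', hl' ▸ div_neg_of_pos_of_neg (sub_pos.mpr hnum) hden⟩
end

section
/- Let V : [0,1] → ℝ be continuous, increasing, concave on [0, α_e] and concave on [α_e, 1] (with a convex kink upward at α_e allowed), with V(1) = 1 and suppose at the point l(1) ∈ [0, α_e) the tangency condition V(1) - V(l(1)) = V'(l(1))·(1 - l(1)) holds, i.e. V(l(1)) + (1 - l(1))·V'(l(1)) = 1. Then for any x ∈ (α_e, 1) and any d ∈ (l(1), α_e] with V'(l(1)) > V'(d) (by strict concavity on [0,α_e]): V(d) + (1-d)·V'(d) < 1 ≤ V(x) + (1-x)·V'(x), where the second inequality uses concavity of V on [α_e,1] via the mean value theorem (V(1) - V(x) ≤ V'(x)(1-x)). -/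
open Set

theorem stmt_19 (V V' : ℝ → ℝ) (α_e l1 x d : ℝ)
    (hαe : α_e ∈ Ioo (0:ℝ) 1)
    (hcont : ContinuousOn V (Icc (0:ℝ) 1))
    (hmono : MonotoneOn V (Icc (0:ℝ) 1))
    (hconc1 : ConcaveOn ℝ (Icc (0:ℝ) α_e) V)
    (hconc2 : ConcaveOn ℝ (Icc α_e 1) V)
    (hderiv : ∀ y ∈ Ioo (0:ℝ) 1, y ≠ α_e → HasDerivAt V (V' y) y)
    (hanti1 : StrictAntiOn V' (Icc (0:ℝ) α_e))
    (hanti2 : AntitoneOn V' (Icc α_e 1))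
    (hV1 : V 1 = 1)
    (hl1 : l1 ∈ Ico (0:ℝ) α_e)
    (htan : V l1 + (1 - l1) * V' l1 = 1)
    (hx : x ∈ Ioo α_e 1) (hd : d ∈ Ioc l1 α_e)
    (hVd : V' d < V' l1) :
    V d + (1 - d) * V' d < 1 ∧ 1 ≤ V x + (1 - x) * V' x := by
  obtain ⟨hαe0, hαe1⟩ := hαe
  obtain ⟨hl10, hl1α⟩ := hl1
  obtain ⟨hxα, hx1⟩ := hx
  obtain ⟨hdl1, hdα⟩ := hd
  constructor
  · -- MVT on [l1, d]
    have hsub : Icc l1 d ⊆ Icc (0:ℝ) 1 :=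
      Icc_subset_Icc hl10 (le_trans hdα hαe1.le)
    obtain ⟨c, hc, hceq⟩ := exists_hasDerivAt_eq_slope V V' hdl1
      (hcont.mono hsub)
      (fun y hy => hderiv y ⟨lt_of_le_of_lt hl10 hy.1, lt_of_lt_of_le hy.2 (le_trans hdα hαe1.le)⟩
        (ne_of_lt (lt_of_lt_of_le hy.2 hdα)))
    have hclt : V' c < V' l1 :=
      hanti1 ⟨hl10, hl1α.le⟩ ⟨le_trans hl10 hc.1.le, le_trans hc.2.le hdα⟩ hc.1
    have hslope : V' c * (d - l1) = V d - V l1 :=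
      (eq_div_iff (sub_ne_zero.mpr hdl1.ne')).mp hceq
    have hd1 : d < 1 := lt_of_le_of_lt hdα hαe1
    nlinarith [mul_lt_mul_of_pos_right hclt (sub_pos.mpr hdl1),
      mul_lt_mul_of_pos_left hVd (sub_pos.mpr hd1)]
  · -- MVT on [x, 1]
    have hsub : Icc x 1 ⊆ Icc (0:ℝ) 1 :=
      Icc_subset_Icc (le_trans hαe0.le hxα.le) le_rfl
    obtain ⟨c, hc, hceq⟩ := exists_hasDerivAt_eq_slope V V' hx1
      (hcont.mono hsub)
      (fun y hy => hderiv y ⟨lt_trans (lt_trans hαe0 hxα) hy.1, hy.2⟩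
        (ne_of_gt (lt_trans hxα hy.1)))
    have hcle : V' c ≤ V' x :=
      hanti2 ⟨hxα.le, hx1.le⟩ ⟨le_trans hxα.le hc.1.le, hc.2.le⟩ hc.1.le
    have hslope : V' c * (1 - x) = V 1 - V x :=
      (eq_div_iff (sub_ne_zero.mpr hx1.ne')).mp hceq
    nlinarith [mul_le_mul_of_nonneg_right hcle (sub_pos.mpr hx1).le]
end
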